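/- arXiv:1205.2362 — 3 statements merged into one kernel-verified Lean document; each statement's English description precedes it below -/
import Mathlib

section
/- For a complex semisimple Lie algebra g of rank ℓ with cascade B of cardinality m, one has −1 ∈ W if and only if m = ℓ. -/
open scoped RealInnerProductSpace

/-!
The closed formula for `w₀` exhibits it as the orthogonal reflection in `(span B)ᗮ`: it is `-1`
on `span B` and `1` on its orthogonal complement. If `-1 ∈ W`, then `-1` sends `Δ₊` to `Δ₋`, so
by uniqueness of the longest element `-1 = w₀`, which forces `span B = V`; conversely
`span B = V` gives `w₀ = -1`. As the nonzero pairwise orthogonal `β ∈ B` are linearly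
independent, `span B = V` exactly when `m = ℓ`.
-/

section

variable {V : Type*} [NormedAddCommGroup V] [InnerProductSpace ℝ V] {B : Finset V}

theorem inner_sum_smul_of_pairwise_inner_eq_zero
    (horth : (B : Set V).Pairwise fun β γ => ⟪β, γ⟫ = 0) (c : V → ℝ) {β₀ : V} (hβ₀ : β₀ ∈ B) :
    ⟪β₀, ∑ β ∈ B, c β • β⟫ = c β₀ * ⟪β₀, β₀⟫ := by
  rw [inner_sum, Finset.sum_eq_single_of_mem β₀ hβ₀ fun β hβ hne => by
    rw [inner_smul_right, horth hβ₀ hβ hne.symm, mul_zero], inner_smul_right]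

theorem linearIndepOn_of_pairwise_inner_eq_zero (hB : ∀ β ∈ B, β ≠ 0)
    (horth : (B : Set V).Pairwise fun β γ => ⟪β, γ⟫ = 0) : LinearIndepOn ℝ id (B : Set V) :=
  linearIndependent_of_ne_zero_of_inner_eq_zero (fun β => hB β β.2)
    fun β γ hne => horth β.2 γ.2 (Subtype.coe_ne_coe.2 hne)

namespace Submodule

theorem starProjection_span_finset_of_pairwise_inner_eq_zero
    (horth : (B : Set V).Pairwise fun β γ => ⟪β, γ⟫ = 0) (v : V) :
    (span ℝ (B : Set V)).starProjection v = ∑ β ∈ B, (⟪β, v⟫ / ⟪β, β⟫) • β := by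
  refine eq_starProjection_of_mem_of_inner_eq_zero
    (sum_mem fun β hβ => smul_mem _ _ (subset_span hβ)) fun w hw => ?_
  have hB : (B : Set V) ⊆ (ℝ ∙ (v - ∑ β ∈ B, (⟪β, v⟫ / ⟪β, β⟫) • β))ᗮ := fun β₀ hβ₀ => by
    rw [SetLike.mem_coe, mem_orthogonal_singleton_iff_inner_left, inner_sub_right,
      inner_sum_smul_of_pairwise_inner_eq_zero horth _ hβ₀,
      div_mul_cancel_of_imp fun h => by rw [inner_self_eq_zero.1 h, inner_zero_left], sub_self]
  exact mem_orthogonal_singleton_iff_inner_right.1 (span_le.2 hB hw)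

theorem reflection_orthogonal_span_finset_of_pairwise_inner_eq_zero
    (horth : (B : Set V).Pairwise fun β γ => ⟪β, γ⟫ = 0) (v : V) :
    (span ℝ (B : Set V))ᗮ.reflection v = v - ∑ β ∈ B, (2 * ⟪β, v⟫ / ⟪β, β⟫) • β := by
  rw [reflection_orthogonal_apply, reflection_apply,
    starProjection_span_finset_of_pairwise_inner_eq_zero horth, neg_sub, Finset.smul_sum]
  simp_rw [mul_div_assoc, mul_smul, ofNat_smul_eq_nsmul]

theorem span_finset_eq_top_iff_card_eq_finrank [FiniteDimensional ℝ V] (hB : ∀ β ∈ B, β ≠ 0)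
    (horth : (B : Set V).Pairwise fun β γ => ⟪β, γ⟫ = 0) :
    span ℝ (B : Set V) = ⊤ ↔ B.card = Module.finrank ℝ V := by
  rw [← finrank_span_finset_eq_card (linearIndepOn_of_pairwise_inner_eq_zero hB horth)]
  exact ⟨fun h => by rw [h, finrank_top], eq_top_of_finrank_eq⟩

theorem forall_reflection_orthogonal_eq_neg_iff {𝕜 E : Type*} [RCLike 𝕜] [NormedAddCommGroup E]
    [InnerProductSpace 𝕜 E] (K : Submodule 𝕜 E) [K.HasOrthogonalProjection] :
    (∀ v, Kᗮ.reflection v = -v) ↔ K = ⊤ := by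
  simp only [reflection_orthogonal_apply, neg_inj, reflection_eq_self_iff, eq_top_iff']

end Submodule

end

theorem neg_one_mem_weylGroup_iff_cascade_card_eq_rank_general
    {V : Type*} [NormedAddCommGroup V] [InnerProductSpace ℝ V] [FiniteDimensional ℝ V]
    (Δpos : Set V) (B : Finset V) (ℓ m : ℕ)
    (W : Subgroup (V ≃ₗ[ℝ] V))
    (hdim : Module.finrank ℝ V = ℓ)
    (hcard : B.card = m)
    (hroot : ∀ β ∈ B, β ≠ 0)
    (horth : (B : Set V).Pairwise fun β γ => ⟪β, γ⟫ = 0)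
    -- `w₀`, the product of the commuting reflections `s_β`, `β ∈ B`, lies in `W`:
    (w₀ : V ≃ₗ[ℝ] V) (hw₀W : w₀ ∈ W)
    (hw₀prod : ∀ v : V, w₀ v = v - ∑ β ∈ B, (2 * ⟪β, v⟫ / ⟪β, β⟫) • β)
    -- and it is the unique element of `W` doing so:
    (huniq : ∀ w ∈ W, (∀ α ∈ Δpos, -(w α) ∈ Δpos) → w = w₀) :
    LinearEquiv.neg ℝ ∈ W ↔ m = ℓ := by
  have hneg_mem_iff : LinearEquiv.neg ℝ ∈ W ↔ ∀ v, w₀ v = -v := by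
    refine ⟨fun hneg v => ?_, fun h => ?_⟩
    · rw [← huniq _ hneg fun α hα => by simpa using hα]
      rfl
    · convert hw₀W
      ext v
      exact (h v).symm
  rw [hneg_mem_iff, ← hcard, ← hdim,
    ← Submodule.span_finset_eq_top_iff_card_eq_finrank hroot horth,
    ← Submodule.forall_reflection_orthogonal_eq_neg_iff]
  simp only [Submodule.reflection_orthogonal_span_finset_of_pairwise_inner_eq_zero horth,
    ← hw₀prod]

/-- For a complex semisimple Lie algebra of rank `ℓ` (whose root system
`Δ`, with positive system `Δpos`, is realized in the real inner product space `V = h_ℝ*`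
of dimension `ℓ`, with Weyl group `W`), with cascade `B` of cardinality `m`:
one has `-1 ∈ W` if and only if `m = ℓ`.

The relevant facts from the paper's Part A are hypotheses: the cascade `B` is a set of
pairwise orthogonal (nonzero) positive roots of cardinality `m`, the product `w₀` of the
associated (commuting) reflections is an element of `W` — given by the closed formula
`w₀ v = v - ∑_{β ∈ B} (2⟪β,v⟫/⟪β,β⟫) β` valid for products of commuting reflections —
and `w₀` is the longest element of `W`, i.e. the unique element of `W` sending `Δ₊`
to `Δ₋`. -/
theorem neg_one_mem_weylGroup_iff_cascade_card_eq_rank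
    {V : Type*} [NormedAddCommGroup V] [InnerProductSpace ℝ V] [FiniteDimensional ℝ V]
    (Δ Δpos : Set V) (B : Finset V) (ℓ m : ℕ)
    (W : Subgroup (V ≃ₗ[ℝ] V))
    (hdim : Module.finrank ℝ V = ℓ)
    (hcard : B.card = m)
    (hBpos : (B : Set V) ⊆ Δpos) (hpossub : Δpos ⊆ Δ)
    (hroot : ∀ β ∈ B, β ≠ 0)
    (horth : (B : Set V).Pairwise fun β γ => ⟪β, γ⟫ = 0)
    -- `w₀`, the product of the commuting reflections `s_β`, `β ∈ B`, lies in `W`: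
    (w₀ : V ≃ₗ[ℝ] V) (hw₀W : w₀ ∈ W)
    (hw₀prod : ∀ v : V, w₀ v = v - ∑ β ∈ B, (2 * ⟪β, v⟫ / ⟪β, β⟫) • β)
    -- and `w₀` is the longest element of `W`: it maps `Δ₊` to `Δ₋`,
    (hw₀long : ∀ α ∈ Δpos, -(w₀ α) ∈ Δpos)
    -- and it is the unique element of `W` doing so:
    (huniq : ∀ w ∈ W, (∀ α ∈ Δpos, -(w α) ∈ Δpos) → w = w₀) :
    LinearEquiv.neg ℝ ∈ W ↔ m = ℓ :=
  neg_one_mem_weylGroup_iff_cascade_card_eq_rank_general Δpos B ℓ m W hdim hcard hroot horth w₀ hw₀W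
    hw₀prod huniq
end

section
/- Let w = ∑_{β∈B} a_β e_{−β} ∈ r₋ with all coefficients a_β nonzero, where B is the cascade of orthogonal roots. If 0 ≠ x ∈ r = span{e_β : β ∈ B}, then the h-component Φ_h([x,w]) of the bracket [x,w] is nonzero. -/
section

variable {R L M N ι : Type*} [CommRing R] [LieRing L] [LieAlgebra R L]
  [AddCommGroup M] [Module R M] [LieRingModule L M] [LieModule R L M]
  [AddCommGroup N] [Module R N] [Fintype ι]

theorem map_lie_sum_smul_of_orthogonal (Φ : M →ₗ[R] N) (e : ι → L) (f : ι → M) (h : ι → N)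
    (hdiag : ∀ i, Φ ⁅e i, f i⁆ = h i) (horth : ∀ i j, i ≠ j → ⁅e i, f j⁆ = 0) (c a : ι → R) :
    Φ ⁅∑ i, c i • e i, ∑ j, a j • f j⁆ = ∑ i, (c i * a i) • h i := by
  classical
  rw [sum_lie_sum, map_sum]
  refine Fintype.sum_congr _ _ fun i => ?_
  rw [map_sum, Fintype.sum_eq_single i fun j hj => by simp [horth i j (Ne.symm hj)]]
  rw [smul_lie, lie_smul, map_smul, map_smul, hdiag, smul_smul]

end

/-- Let `g = n₋ + h + n` be a triangular decomposition of a complex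
semisimple Lie algebra, `Φh : g → h ⊆ g` the projection onto `h` along `n₋ + n`, and let
`B` (indexed by a finite type `ι`) be the cascade of (strongly) orthogonal roots, with
root vectors `e i ∈ g_{β i}`, `f i ∈ g_{-β i}` normalized so that `Φh ⁅e i, f i⁆` is the
Killing-form coroot `hβ i` of `β i`; strong orthogonality gives `⁅e i, f j⁆ = 0` for
`i ≠ j`, and the coroots `hβ i` are linearly independent in `h`.
Let `w = ∑ a i • f i ∈ r₋` with all coefficients `a i` nonzero.
If `0 ≠ x = ∑ c i • e i ∈ r = span{e i}`, then `Φh ⁅x, w⁆ ≠ 0`. -/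
theorem h_component_of_bracket_ne_zero
    {g : Type*} [LieRing g] [LieAlgebra ℂ g]
    (Φh : g →ₗ[ℂ] g)
    {ι : Type*} [Fintype ι]
    (e f hβ : ι → g)
    (hcoroot : ∀ i, Φh ⁅e i, f i⁆ = hβ i)
    (horth : ∀ i j, i ≠ j → ⁅e i, f j⁆ = 0)
    (hindep : LinearIndependent ℂ hβ)
    (a : ι → ℂ) (ha : ∀ i, a i ≠ 0)
    (c : ι → ℂ)
    (x : g) (hx : x = ∑ i, c i • e i) (hxne : x ≠ 0)
    (w : g) (hw : w = ∑ i, a i • f i) :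
    Φh ⁅x, w⁆ ≠ 0 := by
  have hcomp : Φh ⁅x, w⁆ = ∑ i, (c i * a i) • hβ i := by
    rw [hx, hw, map_lie_sum_smul_of_orthogonal Φh e f hβ hcoroot horth]
  intro hzero
  have hc : ∀ i, c i = 0 := fun i =>
    (mul_eq_zero.mp (Fintype.linearIndependent_iff.mp hindep _ (hcomp ▸ hzero) i)).resolve_right
      (ha i)
  exact hxne (by simp [hx, hc])
end

section
/- Let w ∈ r₋^×. Then the B-coadjoint isotropy algebra b_w equals h°, so the B-coadjoint orbit of w has codimension ℓ − m in b* ≅ b₋. -/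
attribute [local instance 100] LieRing.ofAssociativeRing

/-!
The isotropy algebra is `(h° ⊔ r) ⊓ ker f` with `h° ≤ ker f` and `r` meeting `ker f` only in
`0`; by the modular law it collapses to `h°`. The codimension of the orbit is the codimension of
the image of `x ↦ x ∙ w`, which by rank–nullity and `dim b = dim b₋` is `dim b_w = ℓ - m`.
-/

theorem sup_inf_eq_left_of_le_of_disjoint {α : Type*} [Lattice α] [OrderBot α]
    [IsModularLattice α] {x y z : α} (hxz : x ≤ z) (hyz : Disjoint y z) :
    (x ⊔ y) ⊓ z = x := by
  rw [sup_inf_assoc_of_le y hxz, hyz.eq_bot, sup_bot_eq]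

theorem LinearMap.finrank_sub_finrank_range {K M N : Type*} [DivisionRing K]
    [AddCommGroup M] [Module K M] [Module.Finite K M] [AddCommGroup N] [Module K N]
    (g : M →ₗ[K] N) (hdim : Module.finrank K M = Module.finrank K N) :
    Module.finrank K N - Module.finrank K (LinearMap.range g) =
      Module.finrank K (LinearMap.ker g) := by
  have := g.finrank_range_add_finrank_ker
  omega

theorem coadjoint_isotropy_eq_h0_general
    {b : Type*} [LieRing b] [LieAlgebra ℂ b] [Module.Finite ℂ b]
    {V : Type*} [AddCommGroup V] [Module ℂ V]
    {h : Type*} [AddCommGroup h] [Module ℂ h]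
    (π : b →ₗ⁅ℂ⁆ Module.End ℂ V)   -- the coadjoint action of `b` on `b₋`
    (w : V) (ℓ m : ℕ)
    (h₀ r : Submodule ℂ b)
    (f : b →ₗ[ℂ] h)                -- `x ↦ Φ_h ⁅x, w⁆`
    (hker : LinearMap.ker ((π : b →ₗ[ℂ] Module.End ℂ V).flip w)
              = (h₀ ⊔ r) ⊓ LinearMap.ker f)
    (hh₀ : h₀ ≤ LinearMap.ker f)
    (hr : ∀ x ∈ r, x ≠ 0 → f x ≠ 0)
    (hdimh₀ : Module.finrank ℂ ↥h₀ = ℓ - m)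
    (hdimb : Module.finrank ℂ b = Module.finrank ℂ V) :
    LinearMap.ker ((π : b →ₗ[ℂ] Module.End ℂ V).flip w) = h₀ ∧
    Module.finrank ℂ V
        - Module.finrank ℂ (LinearMap.range ((π : b →ₗ[ℂ] Module.End ℂ V).flip w))
      = ℓ - m := by
  have hr_disj : Disjoint r (LinearMap.ker f) :=
    LinearMap.disjoint_ker.mpr fun x hx hfx => by_contra fun hx0 => hr x hx hx0 hfx
  have hisotropy : LinearMap.ker ((π : b →ₗ[ℂ] Module.End ℂ V).flip w) = h₀ := by
    rw [hker, sup_inf_eq_left_of_le_of_disjoint hh₀ hr_disj]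
  refine ⟨hisotropy, ?_⟩
  rw [LinearMap.finrank_sub_finrank_range _ hdimb, hisotropy, hdimh₀]

/-- Let `w ∈ r₋^×` and let `π : b → End(b₋)` be the (differential of
the) coadjoint representation of the Borel subalgebra `b` on `b* ≅ b₋`,
`x ∙ w = Φ_b⁅x, w⁆`.  Let `h° ⊆ h` be the orthocomplement in `h` of the span of the
cascade and `r = span{e_β}`, and let `f : b → h` be the map `x ↦ Φ_h⁅x, w⁆`.  Assume
(as established in the paper): the coadjoint isotropy algebra
`b_w = ker(x ↦ π x w)` consists exactly of those `x ∈ h° + r` with `Φ_h⁅x,w⁆ = 0`;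
`h° ⊆ ker f`; `f` is nonzero on every nonzero element of `r` (by linear independence of
the coroots `β∨` and nonvanishing of the coefficients of `w`); `dim h° = ℓ - m` and
`dim b = dim b₋`.  Then `b_w = h°`, so the coadjoint orbit `B ∙ w` has codimension
`ℓ - m` in `b₋`. -/
theorem coadjoint_isotropy_eq_h0
    {b : Type*} [LieRing b] [LieAlgebra ℂ b] [Module.Finite ℂ b]
    {V : Type*} [AddCommGroup V] [Module ℂ V] [Module.Finite ℂ V]
    {h : Type*} [AddCommGroup h] [Module ℂ h]
    (π : b →ₗ⁅ℂ⁆ Module.End ℂ V)   -- the coadjoint action of `b` on `b₋`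
    (w : V) (ℓ m : ℕ) (hml : m ≤ ℓ)
    (h₀ r : Submodule ℂ b)
    (f : b →ₗ[ℂ] h)                -- `x ↦ Φ_h ⁅x, w⁆`
    (hker : LinearMap.ker ((π : b →ₗ[ℂ] Module.End ℂ V).flip w)
              = (h₀ ⊔ r) ⊓ LinearMap.ker f)
    (hh₀ : h₀ ≤ LinearMap.ker f)
    (hr : ∀ x ∈ r, x ≠ 0 → f x ≠ 0)
    (hdimh₀ : Module.finrank ℂ ↥h₀ = ℓ - m)
    (hdimb : Module.finrank ℂ b = Module.finrank ℂ V) :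
    LinearMap.ker ((π : b →ₗ[ℂ] Module.End ℂ V).flip w) = h₀ ∧
    Module.finrank ℂ V
        - Module.finrank ℂ (LinearMap.range ((π : b →ₗ[ℂ] Module.End ℂ V).flip w))
      = ℓ - m :=
  coadjoint_isotropy_eq_h0_general π w ℓ m h₀ r f hker hh₀ hr hdimh₀ hdimb
end
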